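/- arXiv:cs/0508104 — 6 statements merged into one kernel-verified Lean document; each statement's English description precedes it below -/
import Mathlib

section
/- Let α be a primitive 6th root of unity in an integral domain R (so α^2 - α + 1 = 0 and α^3 = -1). Then the 6×6 matrix K_3(α) with rows [1,1,1,1,1,1], [1,α,α^2,α^5,α^4,-1], [1,α^2,α^4,α^4,α^2,1], [1,α^5,α^4,α,α^2,-1], [1,α^4,α^2,α^2,α^4,1], [1,-1,1,-1,1,-1] satisfies K_3(α) · K_3(α)* = 6·I_6, where K_3(α)* is the transpose of the entrywise-inverse matrix. -/
set_option maxHeartbeats 2000000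

@[simp] private lemma cons_val_five' {α : Type*} {m : ℕ} (x : α)
    (u : Fin m.succ.succ.succ.succ.succ → α) :
    Matrix.vecCons x u 5 =
      Matrix.vecHead (Matrix.vecTail (Matrix.vecTail (Matrix.vecTail (Matrix.vecTail u)))) :=
  rfl

private lemma eq_of_mul_eq_one' {R : Type*} [CommRing R] {x v a : R}
    (hx : x * a = 1) (hv : v * a = 1) : x = v := by
  calc x = x * (v * a) := by rw [hv, mul_one]
    _ = v * (x * a) := by ring
    _ = v := by rw [hx, mul_one]

/-- Let `α` be a primitive 6th root of unity in an integral domain `R`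
(so `α^2 - α + 1 = 0` and `α^3 = -1`). Then the 6×6 matrix `K₃(α)` satisfies
`K₃(α) · K₃(α)* = 6 • I₆`, where `K₃(α)*` is the transpose of the entrywise-inverse
matrix. -/
theorem stmt8 {R : Type*} [CommRing R] [IsDomain R]
    (α : R) (hα : orderOf α = 6) (hα1 : α ^ 2 - α + 1 = 0) (hα2 : α ^ 3 = -1)
    (K Kstar : Matrix (Fin 6) (Fin 6) R)
    (hK : K = !![1, 1,     1,     1,     1,     1;
                 1, α,     α ^ 2, α ^ 5, α ^ 4, -1;
                 1, α ^ 2, α ^ 4, α ^ 4, α ^ 2, 1;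
                 1, α ^ 5, α ^ 4, α,     α ^ 2, -1;
                 1, α ^ 4, α ^ 2, α ^ 2, α ^ 4, 1;
                 1, -1,    1,     -1,    1,     -1])
    (hstar : ∀ i j, Kstar i j * K j i = 1) :
    K * Kstar = (6 : R) • 1 := by
  have h6 : α ^ 6 = 1 := by
    have := hα ▸ pow_orderOf_eq_one α
    simpa using this
  have h2 : α ^ 2 = α - 1 := by linear_combination hα1
  have h3 : α ^ 3 = -1 := hα2
  have h4 : α ^ 4 = -α := by linear_combination α * hα2
  have h5 : α ^ 5 = 1 - α := by linear_combination α ^ 2 * hα2 - hα1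
  have h7 : α ^ 7 = α := by linear_combination α * h6
  have h8 : α ^ 8 = α - 1 := by linear_combination α ^ 2 * h6 + hα1
  have h9 : α ^ 9 = -1 := by linear_combination α ^ 3 * h6 + hα2
  have h10 : α ^ 10 = -α := by linear_combination α ^ 4 * h6 + α * hα2
  have hKs : Kstar = !![1, 1,     1,     1,     1,     1;
                 1, α ^ 5, α ^ 4, α,     α ^ 2, -1;
                 1, α ^ 4, α ^ 2, α ^ 2, α ^ 4, 1;
                 1, α,     α ^ 2, α ^ 5, α ^ 4, -1;
                 1, α ^ 2, α ^ 4, α ^ 4, α ^ 2, 1;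
                 1, -1,    1,     -1,    1,     -1] := by
    ext i j
    have h := hstar i j
    rw [hK] at h
    fin_cases i <;> fin_cases j <;> simp [Matrix.vecHead, Matrix.vecTail, Function.comp] at h ⊢ <;>
      first
        | exact h
        | linear_combination -h
        | exact eq_of_mul_eq_one' h (by first | ring1 | linear_combination h6)
  rw [hK, hKs]
  ext i j
  fin_cases i <;> fin_cases j <;>
    simp [Matrix.mul_apply, Fin.sum_univ_six, Matrix.one_apply] <;>
    ring_nf <;>
    simp only [h2, h3, h4, h5, h6, h7, h8, h9, h10] <;>
    ring
end

section
/- The 8×8 matrix K_4(i) over the Gaussian rationals (or complexes) with rows [1,1,1,1,1,1,1,1], [1,i,-i,1,-1,i,-i,-1], [1,-i,-1,i,i,-1,-i,1], [1,1,i,i,-i,-i,-1,-1], [1,-1,i,-i,i,-i,1,-1], [1,i,-1,-i,-i,-1,i,1], [1,-i,-i,-1,1,i,i,-1], [1,-1,1,-1,-1,1,-1,1] satisfies K_4(i) · K_4(i)* = 8·I_8, where K_4(i)* is the conjugate transpose; hence K_4(i) is a GBH matrix of order 8. -/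
open Matrix Complex

/-!
Every entry of `K₄(i)` is a power `I ^ e` with `e ∈ ZMod 4`, so the `(i, j)` entry of `K Kᴴ`
is `∑ₖ I ^ (e i k - e j k)`. For `i ≠ j` the difference row takes the values `0` and `2` equally
often, and `1` and `3` equally often, so the terms cancel in pairs; for `i = j` every term is `1`.
-/

open Finset

def fourthRoot (a : ZMod 4) : ℂ := I ^ a.val

@[simp] lemma fourthRoot_zero : fourthRoot 0 = 1 := rfl
@[simp] lemma fourthRoot_one : fourthRoot 1 = I := pow_one I
@[simp] lemma fourthRoot_two : fourthRoot 2 = -1 := I_sq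
@[simp] lemma fourthRoot_three : fourthRoot 3 = -I := I_pow_three

lemma fourthRoot_add (a b : ZMod 4) : fourthRoot (a + b) = fourthRoot a * fourthRoot b := by
  rw [fourthRoot, fourthRoot, fourthRoot, ← pow_add, ZMod.val_add,
    ← pow_eq_pow_mod _ I_pow_four]

lemma star_fourthRoot (a : ZMod 4) : star (fourthRoot a) = fourthRoot (-a) := by
  have h : fourthRoot (-a) * fourthRoot a = 1 := by rw [← fourthRoot_add, neg_add_cancel]; rfl
  rw [eq_inv_of_mul_eq_one_left h, fourthRoot, star_pow, Complex.star_def, conj_I, ← inv_I,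
    inv_pow]

section Balanced

variable {ι : Type*} [Fintype ι]

lemma sum_fourthRoot (d : ι → ZMod 4) :
    ∑ k, fourthRoot (d k) =
      (#{k | d k = 0} - #{k | d k = 2} : ℂ) + (#{k | d k = 1} - #{k | d k = 3} : ℂ) * I := by
  rw [← sum_fiberwise' univ d fourthRoot]
  simp only [sum_const, nsmul_eq_mul]
  rw [show (univ : Finset (ZMod 4)) = {0, 1, 2, 3} from rfl,
    sum_insert (by decide), sum_insert (by decide), sum_insert (by decide), sum_singleton]
  simp only [fourthRoot_zero, fourthRoot_one, fourthRoot_two, fourthRoot_three]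
  ring

def IsBalanced (d : ι → ZMod 4) : Prop :=
  #{k | d k = 0} = #{k | d k = 2} ∧ #{k | d k = 1} = #{k | d k = 3}

instance : DecidablePred (IsBalanced (ι := ι)) :=
  fun _ ↦ inferInstanceAs (Decidable (_ ∧ _))

lemma IsBalanced.sum_fourthRoot_eq_zero {d : ι → ZMod 4} (hd : IsBalanced d) :
    ∑ k, fourthRoot (d k) = 0 := by
  rw [sum_fourthRoot, hd.1, hd.2]
  ring

lemma mul_conjTranspose_map_fourthRoot_apply (E : Matrix ι ι (ZMod 4)) (i j : ι) :
    (E.map fourthRoot * (E.map fourthRoot)ᴴ) i j = ∑ k, fourthRoot (E i k - E j k) := by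
  simp only [mul_apply, conjTranspose_apply, map_apply, star_fourthRoot, ← fourthRoot_add,
    sub_eq_add_neg]

lemma mul_conjTranspose_map_fourthRoot [DecidableEq ι] (E : Matrix ι ι (ZMod 4))
    (hE : ∀ i j, i ≠ j → IsBalanced (fun k ↦ E i k - E j k)) :
    E.map fourthRoot * (E.map fourthRoot)ᴴ = (Fintype.card ι : ℂ) • 1 := by
  ext i j
  rw [mul_conjTranspose_map_fourthRoot_apply, Matrix.smul_apply, one_apply]
  obtain rfl | hij := eq_or_ne i j
  · simp
  · simp [(hE i j hij).sum_fourthRoot_eq_zero, hij]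

end Balanced

def k4Exponents : Matrix (Fin 8) (Fin 8) (ZMod 4) :=
  !![0, 0, 0, 0, 0, 0, 0, 0;
     0, 1, 3, 0, 2, 1, 3, 2;
     0, 3, 2, 1, 1, 2, 3, 0;
     0, 0, 1, 1, 3, 3, 2, 2;
     0, 2, 1, 3, 1, 3, 0, 2;
     0, 1, 2, 3, 3, 2, 1, 0;
     0, 3, 3, 2, 0, 1, 1, 2;
     0, 2, 0, 2, 2, 0, 2, 0]

lemma k4Exponents_isBalanced :
    ∀ i j, i ≠ j → IsBalanced (fun k ↦ k4Exponents i k - k4Exponents j k) := by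
  decide

lemma map_fourthRoot_k4Exponents :
    k4Exponents.map fourthRoot = !![1, 1,  1,  1,  1,  1,  1,  1;
                                    1, I,  -I, 1,  -1, I,  -I, -1;
                                    1, -I, -1, I,  I,  -1, -I, 1;
                                    1, 1,  I,  I,  -I, -I, -1, -1;
                                    1, -1, I,  -I, I,  -I, 1,  -1;
                                    1, I,  -1, -I, -I, -1, I,  1;
                                    1, -I, -I, -1, 1,  I,  I,  -1;
                                    1, -1, 1,  -1, -1, 1,  -1, 1] := by
  ext i j
  fin_cases i <;> fin_cases j <;> simp [k4Exponents]

/-- The 8×8 matrix `K₄(i)` over ℂ satisfies `K₄(i) · K₄(i)ᴴ = 8 • I₈`,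
where `K₄(i)ᴴ` is the conjugate transpose (which, for entries among the fourth roots of
unity, is the transpose of the entrywise inverse); hence `K₄(i)` is a GBH matrix of
order 8. -/
theorem stmt9 (K : Matrix (Fin 8) (Fin 8) ℂ)
    (hK : K = !![1, 1,  1,  1,  1,  1,  1,  1;
                 1, I,  -I, 1,  -1, I,  -I, -1;
                 1, -I, -1, I,  I,  -1, -I, 1;
                 1, 1,  I,  I,  -I, -I, -1, -1;
                 1, -1, I,  -I, I,  -I, 1,  -1;
                 1, I,  -1, -I, -I, -1, I,  1;
                 1, -I, -I, -1, 1,  I,  I,  -1;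
                 1, -1, 1,  -1, -1, 1,  -1, 1]) :
    K * Kᴴ = (8 : ℂ) • 1 := by
  rw [hK, ← map_fourthRoot_k4Exponents,
    mul_conjTranspose_map_fourthRoot k4Exponents k4Exponents_isBalanced, Fintype.card_fin,
    Nat.cast_ofNat]
end

section
/- If B is a normalised GBH matrix of order m and K is a jacket matrix of order 2n, both over a commutative ring R, then B ⊗ K is permutation equivalent to a jacket matrix; explicitly, cyclically shifting row 2n of B ⊗ K to the bottom and column 2n to the far right (shifting later rows/columns up/left by one) yields a normalised matrix whose last row and last column have all entries ±1. -/
open Matrix Kronecker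

/-- If `B` is a normalised GBH matrix of order `m` and `K` is a jacket
matrix of order `2n`, both over a commutative ring `R`, then `B ⊗ K` is permutation
equivalent to a jacket matrix: explicitly, cyclically shifting row `2n` (1-based) of
`B ⊗ K` to the bottom and column `2n` to the far right yields a normalised GBH matrix
whose last row and last column have all entries `±1`. -/
theorem stmt11 {R : Type*} [CommRing R] {m n : ℕ} (hm : 1 ≤ m) (hn : 1 ≤ n)
    (B Bstar : Matrix (Fin m) (Fin m) R)
    (hBstar : ∀ i j, Bstar i j * B j i = 1)
    (hB1 : B * Bstar = (m : R) • 1) (hB2 : Bstar * B = (m : R) • 1)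
    (hBrow : ∀ j, B ⟨0, hm⟩ j = 1) (hBcol : ∀ i, B i ⟨0, hm⟩ = 1)
    (K Kstar : Matrix (Fin (2 * n)) (Fin (2 * n)) R)
    (hKstar : ∀ i j, Kstar i j * K j i = 1)
    (hK1 : K * Kstar = ((2 * n : ℕ) : R) • 1) (hK2 : Kstar * K = ((2 * n : ℕ) : R) • 1)
    (hKrow : ∀ j, K ⟨0, by omega⟩ j = 1) (hKcol : ∀ i, K i ⟨0, by omega⟩ = 1)
    (hKlastrow : ∀ j, K ⟨2 * n - 1, by omega⟩ j = 1 ∨ K ⟨2 * n - 1, by omega⟩ j = -1)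
    (hKlastcol : ∀ i, K i ⟨2 * n - 1, by omega⟩ = 1 ∨ K i ⟨2 * n - 1, by omega⟩ = -1)
    -- the flattened Kronecker product, indexed row-major
    (T : Matrix (Fin (m * (2 * n))) (Fin (m * (2 * n))) R)
    (hT : T = Matrix.reindex finProdFinEquiv finProdFinEquiv (B ⊗ₖ K))
    -- the cyclic shift sending position `2n - 1` (0-based) to the end
    (ρ : Fin (m * (2 * n)) → Fin (m * (2 * n)))
    (hρ : ∀ k, ρ k = if (k : ℕ) < 2 * n - 1 then k
      else if h2 : (k : ℕ) = m * (2 * n) - 1 then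
        ⟨2 * n - 1, by have := Nat.le_mul_of_pos_left (2 * n) hm; omega⟩
      else ⟨(k : ℕ) + 1, by have := k.isLt; omega⟩)
    (P : Matrix (Fin (m * (2 * n))) (Fin (m * (2 * n))) R)
    (hP : ∀ a b, P a b = T (ρ a) (ρ b)) :
    (∃ Pstar : Matrix (Fin (m * (2 * n))) (Fin (m * (2 * n))) R,
        (∀ i j, Pstar i j * P j i = 1) ∧
        P * Pstar = ((m * (2 * n) : ℕ) : R) • 1 ∧
        Pstar * P = ((m * (2 * n) : ℕ) : R) • 1) ∧
    (∀ j, P ⟨0, Nat.mul_pos hm (by omega)⟩ j = 1) ∧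
    (∀ i, P i ⟨0, Nat.mul_pos hm (by omega)⟩ = 1) ∧
    (∀ j, P ⟨m * (2 * n) - 1, by have := Nat.mul_pos hm (show 0 < 2 * n by omega); omega⟩ j = 1 ∨
          P ⟨m * (2 * n) - 1, by have := Nat.mul_pos hm (show 0 < 2 * n by omega); omega⟩ j = -1) ∧
    (∀ i, P i ⟨m * (2 * n) - 1, by have := Nat.mul_pos hm (show 0 < 2 * n by omega); omega⟩ = 1 ∨
          P i ⟨m * (2 * n) - 1, by have := Nat.mul_pos hm (show 0 < 2 * n by omega); omega⟩ = -1) := by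
  have hMpos : 0 < m * (2 * n) := Nat.mul_pos hm (by omega)
  have hNle : 2 * n ≤ m * (2 * n) := Nat.le_mul_of_pos_left (2 * n) hm
  -- ρ is injective
  have hinj : Function.Injective ρ := by
    intro a b hab
    rw [hρ a, hρ b] at hab
    apply Fin.ext
    split_ifs at hab with h1 h2 h3 h4 h5 <;>
      simp only [Fin.ext_iff] at hab ⊢ <;> omega
  let σ : Equiv.Perm (Fin (m * (2 * n))) := Equiv.ofBijective ρ
    (Finite.injective_iff_bijective.mp hinj)
  have hσ : ∀ k, σ k = ρ k := fun k => rfl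
  have hPsub : P = T.submatrix σ σ := by
    ext a b; rw [hP]; rfl
  -- Tstar
  set e : Fin m × Fin (2 * n) ≃ Fin (m * (2 * n)) := finProdFinEquiv with he
  set Tstar : Matrix (Fin (m * (2 * n))) (Fin (m * (2 * n))) R :=
    Matrix.reindex e e (Bstar ⊗ₖ Kstar) with hTs
  have hTmul : T * Tstar = ((m * (2 * n) : ℕ) : R) • 1 := by
    rw [hT, hTs]
    simp only [Matrix.reindex_apply]
    rw [Matrix.submatrix_mul_equiv, ← Matrix.mul_kronecker_mul B Bstar K Kstar, hB1, hK1,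
      Matrix.smul_kronecker, Matrix.kronecker_smul, Matrix.one_kronecker_one]
    simp only [Matrix.submatrix_smul, Pi.smul_apply, Matrix.submatrix_one_equiv,
      smul_smul, Nat.cast_mul]
  have hTmul' : Tstar * T = ((m * (2 * n) : ℕ) : R) • 1 := by
    rw [hT, hTs]
    simp only [Matrix.reindex_apply]
    rw [Matrix.submatrix_mul_equiv, ← Matrix.mul_kronecker_mul Bstar B Kstar K, hB2, hK2,
      Matrix.smul_kronecker, Matrix.kronecker_smul, Matrix.one_kronecker_one]
    simp only [Matrix.submatrix_smul, Pi.smul_apply, Matrix.submatrix_one_equiv,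
      smul_smul, Nat.cast_mul]
  have hTentry : ∀ a b, T a b = B (e.symm a).1 (e.symm b).1 * K (e.symm a).2 (e.symm b).2 := by
    intro a b; rw [hT]; rfl
  have hTsentry : ∀ a b,
      Tstar a b = Bstar (e.symm a).1 (e.symm b).1 * Kstar (e.symm a).2 (e.symm b).2 := by
    intro a b; rw [hTs]; rfl
  refine ⟨⟨Tstar.submatrix σ σ, ?_, ?_, ?_⟩, ?_, ?_, ?_, ?_⟩
  · intro i j
    rw [hP, Matrix.submatrix_apply, hTentry, hTsentry]
    calc Bstar (e.symm (σ i)).1 (e.symm (σ j)).1 * Kstar (e.symm (σ i)).2 (e.symm (σ j)).2 *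
        (B (e.symm (σ j)).1 (e.symm (σ i)).1 * K (e.symm (σ j)).2 (e.symm (σ i)).2)
        = (Bstar (e.symm (σ i)).1 (e.symm (σ j)).1 * B (e.symm (σ j)).1 (e.symm (σ i)).1) *
          (Kstar (e.symm (σ i)).2 (e.symm (σ j)).2 * K (e.symm (σ j)).2 (e.symm (σ i)).2) := by
          ring
      _ = 1 := by rw [hBstar, hKstar, one_mul]
  · rw [hPsub, Matrix.submatrix_mul_equiv, hTmul]
    simp only [Matrix.submatrix_smul, Pi.smul_apply, Matrix.submatrix_one_equiv]
  · rw [hPsub, Matrix.submatrix_mul_equiv, hTmul']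
    simp only [Matrix.submatrix_smul, Pi.smul_apply, Matrix.submatrix_one_equiv]
  · -- first row
    have h0 : ((⟨0, hMpos⟩ : Fin (m * (2 * n))) : ℕ) < 2 * n - 1 := by
      simp only [Fin.val_mk]; omega
    have hρ0 : ρ ⟨0, hMpos⟩ = ⟨0, hMpos⟩ := by rw [hρ, if_pos h0]
    have hsymm0 : e.symm ⟨0, hMpos⟩ = (⟨0, hm⟩, ⟨0, by omega⟩) := by
      rw [Equiv.symm_apply_eq]
      apply Fin.ext
      simp [he]
    intro j
    rw [hP, hρ0, hTentry, hsymm0, hBrow, hKrow, one_mul]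
  · -- first column
    have h0 : ((⟨0, hMpos⟩ : Fin (m * (2 * n))) : ℕ) < 2 * n - 1 := by
      simp only [Fin.val_mk]; omega
    have hρ0 : ρ ⟨0, hMpos⟩ = ⟨0, hMpos⟩ := by rw [hρ, if_pos h0]
    have hsymm0 : e.symm ⟨0, hMpos⟩ = (⟨0, hm⟩, ⟨0, by omega⟩) := by
      rw [Equiv.symm_apply_eq]
      apply Fin.ext
      simp [he]
    intro i
    rw [hP, hρ0, hTentry, hsymm0, hBcol, hKcol, one_mul]
  · -- last row
    have h2n1 : 2 * n - 1 < m * (2 * n) := by omega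
    have hMlt : m * (2 * n) - 1 < m * (2 * n) := by omega
    have h1 : ¬ ((⟨m * (2 * n) - 1, hMlt⟩ : Fin (m * (2 * n))) : ℕ) < 2 * n - 1 := by
      simp only [Fin.val_mk]; omega
    have h2 : ((⟨m * (2 * n) - 1, hMlt⟩ : Fin (m * (2 * n))) : ℕ) = m * (2 * n) - 1 := rfl
    have hρlast : ρ ⟨m * (2 * n) - 1, hMlt⟩ = ⟨2 * n - 1, h2n1⟩ := by
      rw [hρ, if_neg h1, dif_pos h2]
    have hsymmlast : e.symm ⟨2 * n - 1, h2n1⟩ = (⟨0, hm⟩, ⟨2 * n - 1, by omega⟩) := by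
      rw [Equiv.symm_apply_eq]
      apply Fin.ext
      simp [he]
    intro j
    rw [hP, hρlast, hTentry, hsymmlast, hBrow, one_mul]
    exact hKlastrow _
  · -- last column
    have h2n1 : 2 * n - 1 < m * (2 * n) := by omega
    have hMlt : m * (2 * n) - 1 < m * (2 * n) := by omega
    have h1 : ¬ ((⟨m * (2 * n) - 1, hMlt⟩ : Fin (m * (2 * n))) : ℕ) < 2 * n - 1 := by
      simp only [Fin.val_mk]; omega
    have h2 : ((⟨m * (2 * n) - 1, hMlt⟩ : Fin (m * (2 * n))) : ℕ) = m * (2 * n) - 1 := rfl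
    have hρlast : ρ ⟨m * (2 * n) - 1, hMlt⟩ = ⟨2 * n - 1, h2n1⟩ := by
      rw [hρ, if_neg h1, dif_pos h2]
    have hsymmlast : e.symm ⟨2 * n - 1, h2n1⟩ = (⟨0, hm⟩, ⟨2 * n - 1, by omega⟩) := by
      rw [Equiv.symm_apply_eq]
      apply Fin.ext
      simp [he]
    intro i
    rw [hP, hρlast, hTentry, hsymmlast, hBcol, one_mul]
    exact hKlastcol _
end

section
/- If K and K' are jacket matrices of orders 2n and 2n' over R, then K ⊗ K' is permutation equivalent to a jacket matrix of order 4nn'. -/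
open Matrix Kronecker

/-- A jacket matrix of order `2n` over a commutative ring `R`: a normalised GBH matrix
(`K K* = K* K = 2n • I` where `K*` is the transpose of the entrywise inverse, with all-1s
first row and column) whose last row and last column have all entries in `{1, -1}`. -/
def IsJacket {R : Type*} [CommRing R] (n : ℕ) (hn : 1 ≤ n)
    (K : Matrix (Fin (2 * n)) (Fin (2 * n)) R) : Prop :=
  (∃ Kstar : Matrix (Fin (2 * n)) (Fin (2 * n)) R,
      (∀ i j, Kstar i j * K j i = 1) ∧
      K * Kstar = ((2 * n : ℕ) : R) • 1 ∧ Kstar * K = ((2 * n : ℕ) : R) • 1) ∧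
  (∀ j, K ⟨0, by omega⟩ j = 1) ∧ (∀ i, K i ⟨0, by omega⟩ = 1) ∧
  (∀ j, K ⟨2 * n - 1, by omega⟩ j = 1 ∨ K ⟨2 * n - 1, by omega⟩ j = -1) ∧
  (∀ i, K i ⟨2 * n - 1, by omega⟩ = 1 ∨ K i ⟨2 * n - 1, by omega⟩ = -1)

/-!
The Kronecker product of GBH matrices `K`, `K'` is again GBH, with `K* ⊗ K'*` as its star
matrix and constant `2n · 2n'`, because `(A ⊗ B)(C ⊗ D) = AC ⊗ BD`. Row and column `(i, i')` of
`K ⊗ K'` consist of the products of the entries of row (column) `i` of `K` and `i'` of `K'`, so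
`(0, 0)` is an all-ones row and column and `(last, last)` a `±1` row and column. Enumerating
`Fin (2n) × Fin (2n')` lexicographically sends `(0, 0)` to the first and `(last, last)` to the
last index of `Fin (4nn')`.
-/

theorem mul_eq_one_or_eq_neg_one {M : Type*} [Monoid M] [HasDistribNeg M] {a b : M}
    (ha : a = 1 ∨ a = -1) (hb : b = 1 ∨ b = -1) : a * b = 1 ∨ a * b = -1 := by
  rcases ha with rfl | rfl <;> rcases hb with rfl | rfl <;> simp

section Jacket

variable {R : Type*} [CommRing R] {ι κ ι' : Type*}
  [Fintype ι] [DecidableEq ι] [Fintype κ] [DecidableEq κ] [Fintype ι'] [DecidableEq ι']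

def IsGBHWith (c : R) (K Kstar : Matrix ι ι R) : Prop :=
  (∀ i j, Kstar i j * K j i = 1) ∧ K * Kstar = c • 1 ∧ Kstar * K = c • 1

theorem IsGBHWith.kronecker {c c' : R} {K Kstar : Matrix ι ι R} {K' Kstar' : Matrix ι' ι' R}
    (h : IsGBHWith c K Kstar) (h' : IsGBHWith c' K' Kstar') :
    IsGBHWith (c * c') (K ⊗ₖ K') (Kstar ⊗ₖ Kstar') := by
  obtain ⟨hinv, hright, hleft⟩ := h
  obtain ⟨hinv', hright', hleft'⟩ := h'
  refine ⟨fun i j => ?_, ?_, ?_⟩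
  · rw [kroneckerMap_apply, kroneckerMap_apply, mul_mul_mul_comm, hinv, hinv', one_mul]
  · rw [← mul_kronecker_mul, hright, hright', smul_kronecker, kronecker_smul, one_kronecker_one,
      smul_smul]
  · rw [← mul_kronecker_mul, hleft, hleft', smul_kronecker, kronecker_smul, one_kronecker_one,
      smul_smul]

theorem IsGBHWith.submatrix {c : R} {K Kstar : Matrix ι ι R} (h : IsGBHWith c K Kstar)
    (e : κ ≃ ι) : IsGBHWith c (K.submatrix e e) (Kstar.submatrix e e) := by
  obtain ⟨hinv, hright, hleft⟩ := h
  refine ⟨fun i j => hinv (e i) (e j), ?_, ?_⟩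
  · rw [submatrix_mul_equiv, hright, ← submatrix_one_equiv e]
    rfl
  · rw [submatrix_mul_equiv, hleft, ← submatrix_one_equiv e]
    rfl

def IsJacketAt (c : R) (K : Matrix ι ι R) (first last : ι) : Prop :=
  (∃ Kstar, IsGBHWith c K Kstar) ∧
  (∀ j, K first j = 1) ∧ (∀ i, K i first = 1) ∧
  (∀ j, K last j = 1 ∨ K last j = -1) ∧ (∀ i, K i last = 1 ∨ K i last = -1)

theorem isJacket_iff_isJacketAt {n : ℕ} (hn : 1 ≤ n) (K : Matrix (Fin (2 * n)) (Fin (2 * n)) R) :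
    IsJacket n hn K ↔ IsJacketAt ((2 * n : ℕ) : R) K ⟨0, by omega⟩ ⟨2 * n - 1, by omega⟩ :=
  Iff.rfl

theorem IsJacketAt.kronecker {c c' : R} {K : Matrix ι ι R} {K' : Matrix ι' ι' R}
    {first last : ι} {first' last' : ι'}
    (h : IsJacketAt c K first last) (h' : IsJacketAt c' K' first' last') :
    IsJacketAt (c * c') (K ⊗ₖ K') (first, first') (last, last') := by
  obtain ⟨⟨Kstar, hK⟩, hrow, hcol, hrowl, hcoll⟩ := h
  obtain ⟨⟨Kstar', hK'⟩, hrow', hcol', hrowl', hcoll'⟩ := h'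
  refine ⟨⟨_, hK.kronecker hK'⟩, fun j => ?_, fun i => ?_, fun j => ?_, fun i => ?_⟩
  · rw [kroneckerMap_apply, hrow, hrow', one_mul]
  · rw [kroneckerMap_apply, hcol, hcol', one_mul]
  · exact mul_eq_one_or_eq_neg_one (hrowl j.1) (hrowl' j.2)
  · exact mul_eq_one_or_eq_neg_one (hcoll i.1) (hcoll' i.2)

theorem IsJacketAt.submatrix {c : R} {K : Matrix ι ι R} {first last : ι}
    (h : IsJacketAt c K first last) (e : κ ≃ ι) {first₀ last₀ : κ}
    (hfirst : e first₀ = first) (hlast : e last₀ = last) :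
    IsJacketAt c (K.submatrix e e) first₀ last₀ := by
  obtain ⟨⟨Kstar, hK⟩, hrow, hcol, hrowl, hcoll⟩ := h
  refine ⟨⟨_, hK.submatrix e⟩, fun j => ?_, fun i => ?_, fun j => ?_, fun i => ?_⟩ <;>
    simp only [submatrix_apply, hfirst, hlast]
  exacts [hrow _, hcol _, hrowl _, hcoll _]

end Jacket

theorem finProdFinEquiv_mk_zero_zero {m n : ℕ} (hm : 0 < m) (hn : 0 < n) :
    finProdFinEquiv (⟨0, hm⟩, ⟨0, hn⟩) = ⟨0, Nat.mul_pos hm hn⟩ := by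
  ext
  simp

theorem finProdFinEquiv_mk_sub_one_sub_one {m n : ℕ} (hm : 0 < m) (hn : 0 < n) :
    finProdFinEquiv (⟨m - 1, Nat.sub_lt hm one_pos⟩, ⟨n - 1, Nat.sub_lt hn one_pos⟩) =
      ⟨m * n - 1, by have := Nat.mul_pos hm hn; omega⟩ := by
  ext
  obtain ⟨m, rfl⟩ := Nat.exists_eq_add_of_lt hm
  obtain ⟨n, rfl⟩ := Nat.exists_eq_add_of_lt hn
  simp only [finProdFinEquiv_apply_val, zero_add, add_tsub_cancel_right]
  ring_nf
  omega

/-- If `K` and `K'` are jacket matrices of orders `2n` and `2n'` over `R`,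
then `K ⊗ K'` is permutation equivalent to a jacket matrix of order `4nn'`. -/
theorem stmt12 {R : Type*} [CommRing R] {n n' : ℕ} (hn : 1 ≤ n) (hn' : 1 ≤ n')
    (K : Matrix (Fin (2 * n)) (Fin (2 * n)) R)
    (K' : Matrix (Fin (2 * n')) (Fin (2 * n')) R)
    (hK : IsJacket n hn K) (hK' : IsJacket n' hn' K') :
    ∃ (J : Matrix (Fin (2 * (2 * (n * n')))) (Fin (2 * (2 * (n * n')))) R)
      (σ τ : Fin (2 * (2 * (n * n'))) ≃ Fin (2 * n) × Fin (2 * n')),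
      (∀ a b, J a b = (K ⊗ₖ K') (σ a) (τ b)) ∧
      IsJacket (2 * (n * n')) (by nlinarith) J := by
  have hdim : 2 * n * (2 * n') = 2 * (2 * (n * n')) := by ring
  let e := (finProdFinEquiv.trans (finCongr hdim)).symm
  refine ⟨(K ⊗ₖ K').submatrix e e, e, e, fun _ _ => rfl, ?_⟩
  have hprod := ((isJacket_iff_isJacketAt hn K).1 hK).kronecker
    ((isJacket_iff_isJacketAt hn' K').1 hK')
  rw [isJacket_iff_isJacketAt, show ((2 * (2 * (n * n')) : ℕ) : R) = (2 * n : ℕ) * (2 * n' : ℕ) by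
    push_cast; ring]
  refine hprod.submatrix e ?_ ?_ <;> rw [Equiv.symm_apply_eq, Equiv.trans_apply]
  · rw [finProdFinEquiv_mk_zero_zero (by omega) (by omega), finCongr_apply_mk]
  · rw [finProdFinEquiv_mk_sub_one_sub_one (by omega) (by omega), finCongr_apply_mk,
      Fin.mk.injEq, hdim]
end

section
/- The complex BIFORE transform matrix C_t, defined by C_1 = [[1,-i],[1,i]], C_2 = [[S_1, S_1],[C_1, -C_1]] (block form), and C_m = [[C_{m-1}, C_{m-1}],[C_1 ⊗ S_{m-2}, -C_1 ⊗ S_{m-2}]] for m ≥ 3, satisfies C_t · C_t^H = 2^t · I_{2^t} for all t ≥ 1, where C_t^H is the conjugate transpose. -/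
open Matrix Kronecker

/-- The 2×2 Walsh-Hadamard matrix over ℂ. -/
def S1 : Matrix (Fin 2) (Fin 2) ℂ := !![1, 1; 1, -1]

/-- `WS k` is the `k`-fold Kronecker power of `S1`, the Walsh-Hadamard matrix `S_k`. -/
def WS : (k : ℕ) → Matrix (Fin (2 ^ k)) (Fin (2 ^ k)) ℂ
  | 0 => 1
  | k + 1 =>
    Matrix.reindex (finProdFinEquiv.trans (finCongr (by ring : 2 * 2 ^ k = 2 ^ (k + 1))))
      (finProdFinEquiv.trans (finCongr (by ring : 2 * 2 ^ k = 2 ^ (k + 1))))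
      (S1 ⊗ₖ WS k)

/-- `C1 = [[1,-i],[1,i]]`. -/
def C1 : Matrix (Fin 2) (Fin 2) ℂ := !![1, -Complex.I; 1, Complex.I]

/-- The complex BIFORE transform matrix `C_t` of order `2^t`:
`C_1 = [[1,-i],[1,i]]`, `C_2 = [[S_1, S_1],[C_1, -C_1]]`, and
`C_m = [[C_{m-1}, C_{m-1}],[C_1 ⊗ S_{m-2}, -C_1 ⊗ S_{m-2}]]` for `m ≥ 3`
(`C_0` is set to the 1×1 identity by convention). -/
def CB : (t : ℕ) → Matrix (Fin (2 ^ t)) (Fin (2 ^ t)) ℂ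
  | 0 => 1
  | 1 => Matrix.reindex (finCongr (by norm_num : 2 = 2 ^ 1))
      (finCongr (by norm_num : 2 = 2 ^ 1)) C1
  | 2 => Matrix.reindex (finSumFinEquiv.trans (finCongr (by norm_num : 2 + 2 = 2 ^ 2)))
      (finSumFinEquiv.trans (finCongr (by norm_num : 2 + 2 = 2 ^ 2)))
      (Matrix.fromBlocks S1 S1 C1 (-C1))
  | (m + 3) =>
    let W : Matrix (Fin (2 ^ (m + 2))) (Fin (2 ^ (m + 2))) ℂ :=
      Matrix.reindex (finProdFinEquiv.trans (finCongr (by ring : 2 * 2 ^ (m + 1) = 2 ^ (m + 2))))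
        (finProdFinEquiv.trans (finCongr (by ring : 2 * 2 ^ (m + 1) = 2 ^ (m + 2))))
        (C1 ⊗ₖ WS (m + 1))
    Matrix.reindex
      (finSumFinEquiv.trans (finCongr (by ring : 2 ^ (m + 2) + 2 ^ (m + 2) = 2 ^ (m + 3))))
      (finSumFinEquiv.trans (finCongr (by ring : 2 ^ (m + 2) + 2 ^ (m + 2) = 2 ^ (m + 3))))
      (Matrix.fromBlocks (CB (m + 2)) (CB (m + 2)) W (-W))

/- auxiliary lemmas -/

lemma conjTranspose_kron {l m n p : Type*} (A : Matrix l m ℂ) (B : Matrix n p ℂ) :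
    (A ⊗ₖ B)ᴴ = Aᴴ ⊗ₖ Bᴴ := by
  ext ⟨i, j⟩ ⟨k, r⟩
  simp [Matrix.conjTranspose_apply, Matrix.kroneckerMap_apply, mul_comm]

lemma reindex_mul_reindex {m n : Type*} [Fintype m] [Fintype n] [DecidableEq m] [DecidableEq n]
    (e : m ≃ n) (A B : Matrix m m ℂ) :
    (Matrix.reindex e e A) * (Matrix.reindex e e B) = Matrix.reindex e e (A * B) := by
  simp [Matrix.reindex_apply, Matrix.submatrix_mul_equiv]

lemma conjTranspose_reindex' {m n : Type*} (e : m ≃ n) (A : Matrix m m ℂ) :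
    (Matrix.reindex e e A)ᴴ = Matrix.reindex e e Aᴴ := by
  simp [Matrix.reindex_apply, Matrix.conjTranspose_submatrix]

lemma reindex_smul_one {m n : Type*} [Fintype m] [DecidableEq m] [DecidableEq n]
    (e : m ≃ n) (c : ℂ) :
    Matrix.reindex e e (c • (1 : Matrix m m ℂ)) = c • (1 : Matrix n n ℂ) := by
  ext i j
  simp [Matrix.reindex_apply, Matrix.one_apply, EmbeddingLike.apply_eq_iff_eq]

lemma fromBlocks_smul_one {m n : Type*} [DecidableEq m] [DecidableEq n] (c : ℂ) :
    Matrix.fromBlocks (c • (1 : Matrix m m ℂ)) 0 0 (c • (1 : Matrix n n ℂ)) =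
      c • (1 : Matrix (m ⊕ n) (m ⊕ n) ℂ) := by
  have h := Matrix.fromBlocks_smul c (1 : Matrix m m ℂ) (0 : Matrix m n ℂ)
    (0 : Matrix n m ℂ) (1 : Matrix n n ℂ)
  simp only [smul_zero] at h
  rw [← h, Matrix.fromBlocks_one]

lemma S1_mul : S1 * S1ᴴ = (2 : ℂ) • 1 := by
  ext i j
  fin_cases i <;> fin_cases j <;>
    simp [S1, Matrix.mul_apply, Fin.sum_univ_two, Matrix.conjTranspose_apply, Matrix.one_apply] <;>
    norm_num

lemma C1_mul : C1 * C1ᴴ = (2 : ℂ) • 1 := by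
  ext i j
  fin_cases i <;> fin_cases j <;>
    simp [C1, Matrix.mul_apply, Fin.sum_univ_two, Matrix.conjTranspose_apply, Matrix.one_apply,
      Complex.ext_iff] <;> norm_num

lemma WS_mul (k : ℕ) : WS k * (WS k)ᴴ = ((2 : ℂ) ^ k) • 1 := by
  induction k with
  | zero => simp [WS]
  | succ k ih =>
    rw [WS, conjTranspose_reindex', reindex_mul_reindex, conjTranspose_kron,
      ← Matrix.mul_kronecker_mul, S1_mul, ih, Matrix.smul_kronecker, Matrix.kronecker_smul,
      Matrix.one_kronecker_one, smul_smul, reindex_smul_one]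
    congr 1
    ring

lemma CB_mul (t : ℕ) : CB t * (CB t)ᴴ = ((2 : ℂ) ^ t) • 1 := by
  induction t using Nat.strong_induction_on with
  | _ t ih =>
    match t with
    | 0 => simp [CB]
    | 1 =>
      rw [CB, conjTranspose_reindex', reindex_mul_reindex, C1_mul]
      simp [Matrix.reindex_apply, Matrix.submatrix_smul, Matrix.submatrix_one_equiv]
    | 2 =>
      rw [CB, conjTranspose_reindex', reindex_mul_reindex, Matrix.fromBlocks_conjTranspose,
        Matrix.fromBlocks_multiply]
      simp only [Matrix.conjTranspose_neg, Matrix.mul_neg, Matrix.neg_mul, neg_neg,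
        S1_mul, C1_mul, add_neg_cancel]
      have : ((2:ℂ) • (1 : Matrix (Fin 2) (Fin 2) ℂ)) + (2:ℂ) • 1 = (2^2 : ℂ) • 1 := by
        rw [← add_smul]; norm_num
      rw [show ((2:ℂ) • (1 : Matrix (Fin 2) (Fin 2) ℂ)) + (2:ℂ) • 1 = (2^2 : ℂ) • 1 by
          rw [← add_smul]; norm_num,
        fromBlocks_smul_one, reindex_smul_one]
    | (m + 3) =>
      rw [CB]
      set W : Matrix (Fin (2 ^ (m + 2))) (Fin (2 ^ (m + 2))) ℂ :=
        Matrix.reindex (finProdFinEquiv.trans (finCongr (by ring : 2 * 2 ^ (m + 1) = 2 ^ (m + 2))))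
          (finProdFinEquiv.trans (finCongr (by ring : 2 * 2 ^ (m + 1) = 2 ^ (m + 2))))
          (C1 ⊗ₖ WS (m + 1)) with hW
      have hWW : W * Wᴴ = ((2:ℂ) ^ (m + 2)) • 1 := by
        rw [hW, conjTranspose_reindex', reindex_mul_reindex, conjTranspose_kron,
          ← Matrix.mul_kronecker_mul, C1_mul, WS_mul, Matrix.smul_kronecker,
          Matrix.kronecker_smul, Matrix.one_kronecker_one, smul_smul, reindex_smul_one]
        congr 1
        ring
      have hCC : CB (m + 2) * (CB (m + 2))ᴴ = ((2:ℂ) ^ (m + 2)) • 1 := ih (m + 2) (by omega)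
      rw [conjTranspose_reindex', reindex_mul_reindex, Matrix.fromBlocks_conjTranspose,
        Matrix.fromBlocks_multiply]
      simp only [Matrix.conjTranspose_neg, Matrix.mul_neg, Matrix.neg_mul, neg_neg,
        hCC, hWW, add_neg_cancel]
      have e1 : ((2:ℂ)^(m+2)) • (1 : Matrix (Fin (2^(m+2))) (Fin (2^(m+2))) ℂ)
          + ((2:ℂ)^(m+2)) • 1 = ((2:ℂ)^(m+3)) • 1 := by
        rw [← add_smul]; congr 1; ring
      rw [e1, fromBlocks_smul_one, reindex_smul_one]

/-- The complex BIFORE transform matrix `C_t` satisfies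
`C_t · C_tᴴ = 2^t • I` for all `t ≥ 1`, where `C_tᴴ` is the conjugate transpose. -/
theorem stmt15 (t : ℕ) (ht : 1 ≤ t) :
    CB t * (CB t)ᴴ = ((2 ^ t : ℕ) : ℂ) • 1 := by
  rw [CB_mul]
  push_cast
  ring_nf
end

section
/- The 12×12 matrix K_6(β, r) = (B_3 ⊗ K_2(r))†, obtained from B_3 ⊗ K_2(r) by cyclically moving row 4 to the bottom and column 4 to the far right, satisfies K_6(β,r) · K_6(β,r)* = 12·I_12 and has all-1s first row and column and ±1 last row and column; i.e., it is a jacket matrix of order 12. -/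
open Matrix Kronecker

set_option maxHeartbeats 1000000 in
/-- The 12×12 matrix `K₆(β, r) = (B₃ ⊗ K₂(r))†`, obtained from
`B₃ ⊗ K₂(r)` by cyclically moving row 4 (1-based) to the bottom and column 4 to the far
right, satisfies `K₆(β,r) · K₆(β,r)* = 12 • I₁₂`, has all-1s first row and column, and
`±1` last row and column; i.e. it is a jacket matrix of order 12. -/
theorem stmt17 {R : Type*} [CommRing R] (h12 : IsUnit (12 : R))
    (β : R) (hβ1 : β ≠ 1) (hβ : β ^ 2 + β + 1 = 0)
    (r : R) (hr1 : r ≠ 1) (hr2 : r ≠ -1)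
    (B3 : Matrix (Fin 3) (Fin 3) R) (hB3 : B3 = !![1, 1, 1; 1, β, β ^ 2; 1, β ^ 2, β])
    (K2 : Matrix (Fin 4) (Fin 4) R)
    (hK2 : K2 = !![1, 1, 1, 1; 1, -r, r, -1; 1, r, -r, -1; 1, -1, -1, 1])
    (e : Fin 3 × Fin 4 ≃ Fin 12) (he : e = finProdFinEquiv.trans (finCongr (by norm_num)))
    (ρ : Fin 12 → Fin 12)
    (hρ : ∀ k, ρ k = if (k : ℕ) < 3 then k else if h : (k : ℕ) = 11 then ⟨3, by omega⟩
      else ⟨(k : ℕ) + 1, by have := k.isLt; omega⟩)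
    (K6 K6star : Matrix (Fin 12) (Fin 12) R)
    (hK6 : ∀ a b, K6 a b = (Matrix.reindex e e (B3 ⊗ₖ K2)) (ρ a) (ρ b))
    (hstar : ∀ i j, K6star i j * K6 j i = 1) :
    K6 * K6star = (12 : R) • 1 ∧ K6star * K6 = (12 : R) • 1 ∧
    (∀ j, K6 0 j = 1) ∧ (∀ i, K6 i 0 = 1) ∧
    (∀ j, K6 11 j = 1 ∨ K6 11 j = -1) ∧ (∀ i, K6 i 11 = 1 ∨ K6 i 11 = -1) := by
  have hβ3 : β ^ 3 = 1 := by linear_combination (β - 1) * hβ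
  have hρfun := funext hρ
  have hbij : Function.Bijective ρ := by rw [hρfun]; decide
  have hρ0 : ρ 0 = 0 := by rw [hρfun]; decide
  have hρ1 : ρ 1 = 1 := by rw [hρfun]; decide
  have hρ2 : ρ 2 = 2 := by rw [hρfun]; decide
  have hρ11 : ρ 11 = 3 := by rw [hρfun]; decide
  have hs0 : e.symm 0 = (0, 0) := by rw [he]; decide
  have hs1 : e.symm 1 = (0, 1) := by rw [he]; decide
  have hs2 : e.symm 2 = (0, 2) := by rw [he]; decide
  have hs3 : e.symm 3 = (0, 3) := by rw [he]; decide
  -- obtain t with t * r = 1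
  have hK612 : K6 1 2 = r := by
    rw [hK6, hρ1, hρ2, Matrix.reindex_apply, Matrix.submatrix_apply, hs1, hs2,
      Matrix.kroneckerMap_apply, hB3, hK2]
    simp
  set t := K6star 2 1 with ht
  have hrt : t * r = 1 := by have := hstar 2 1; rwa [hK612] at this
  -- inverse matrices
  set B3' : Matrix (Fin 3) (Fin 3) R := !![1, 1, 1; 1, β ^ 2, β; 1, β, β ^ 2] with hB3'
  set K2' : Matrix (Fin 4) (Fin 4) R :=
    !![1, 1, 1, 1; 1, -t, t, -1; 1, t, -t, -1; 1, -1, -1, 1] with hK2'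
  have hB3inv : ∀ a c, B3 a c * B3' c a = 1 := by
    intro a c
    fin_cases a <;> fin_cases c <;>
      simp [hB3, hB3', Matrix.vecHead, Matrix.vecTail] <;>
      first
        | linear_combination hβ3
        | linear_combination β * hβ3
  have hK2inv : ∀ b d, K2 b d * K2' d b = 1 := by
    intro b d
    fin_cases b <;> fin_cases d <;>
      simp [hK2, hK2', Matrix.vecHead, Matrix.vecTail] <;>
      linear_combination hrt
  have hBB : B3 * B3' = (3 : R) • 1 := by
    ext a c
    rw [Matrix.mul_apply, Fin.sum_univ_three]
    fin_cases a <;> fin_cases c <;>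
      simp [hB3, hB3', Matrix.smul_apply, Matrix.one_apply, Matrix.vecHead, Matrix.vecTail] <;>
      first
        | ring1
        | linear_combination hβ
        | linear_combination 2 * hβ3
        | linear_combination hβ + β * hβ3
  have hBB' : B3' * B3 = (3 : R) • 1 := by
    ext a c
    rw [Matrix.mul_apply, Fin.sum_univ_three]
    fin_cases a <;> fin_cases c <;>
      simp [hB3, hB3', Matrix.smul_apply, Matrix.one_apply, Matrix.vecHead, Matrix.vecTail] <;>
      first
        | ring1
        | linear_combination hβ
        | linear_combination 2 * hβ3
        | linear_combination hβ + β * hβ3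
  have hKK : K2 * K2' = (4 : R) • 1 := by
    ext a c
    rw [Matrix.mul_apply, Fin.sum_univ_four]
    fin_cases a <;> fin_cases c <;>
      simp [hK2, hK2', Matrix.smul_apply, Matrix.one_apply, Matrix.vecHead, Matrix.vecTail] <;>
      first
        | ring1
        | linear_combination 2 * hrt
        | linear_combination (-2 : R) * hrt
  have hKK' : K2' * K2 = (4 : R) • 1 := by
    ext a c
    rw [Matrix.mul_apply, Fin.sum_univ_four]
    fin_cases a <;> fin_cases c <;>
      simp [hK2, hK2', Matrix.smul_apply, Matrix.one_apply, Matrix.vecHead, Matrix.vecTail] <;>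
      first
        | ring1
        | linear_combination 2 * hrt
        | linear_combination (-2 : R) * hrt
  set M : Matrix (Fin 12) (Fin 12) R := Matrix.reindex e e (B3 ⊗ₖ K2) with hM
  set N : Matrix (Fin 12) (Fin 12) R := Matrix.reindex e e (B3' ⊗ₖ K2') with hN
  have hMN : M * N = (12 : R) • 1 := by
    rw [hM, hN, Matrix.reindex_apply, Matrix.reindex_apply, Matrix.submatrix_mul_equiv,
      ← Matrix.mul_kronecker_mul, hBB, hKK, Matrix.smul_kronecker, Matrix.kronecker_smul,
      Matrix.one_kronecker_one, smul_smul]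
    rw [show ((3 : R) * 4) = (12 : R) by norm_num]
    ext i j
    simp [Matrix.submatrix_apply, Matrix.smul_apply, Matrix.one_apply,
      EmbeddingLike.apply_eq_iff_eq]
  have hNM : N * M = (12 : R) • 1 := by
    rw [hM, hN, Matrix.reindex_apply, Matrix.reindex_apply, Matrix.submatrix_mul_equiv,
      ← Matrix.mul_kronecker_mul, hBB', hKK', Matrix.smul_kronecker, Matrix.kronecker_smul,
      Matrix.one_kronecker_one, smul_smul]
    rw [show ((3 : R) * 4) = (12 : R) by norm_num]
    ext i j
    simp [Matrix.submatrix_apply, Matrix.smul_apply, Matrix.one_apply,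
      EmbeddingLike.apply_eq_iff_eq]
  have hinv : ∀ i j, K6 j i * N (ρ i) (ρ j) = 1 := by
    intro i j
    rw [hK6, hM, hN, Matrix.reindex_apply, Matrix.reindex_apply, Matrix.submatrix_apply,
      Matrix.submatrix_apply, Matrix.kroneckerMap_apply, Matrix.kroneckerMap_apply,
      mul_mul_mul_comm, hB3inv, hK2inv, mul_one]
  have hstar_eq : ∀ i j, K6star i j = N (ρ i) (ρ j) := by
    intro i j
    calc K6star i j = K6star i j * (K6 j i * N (ρ i) (ρ j)) := by rw [hinv i j, mul_one]
      _ = (K6star i j * K6 j i) * N (ρ i) (ρ j) := by ring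
      _ = N (ρ i) (ρ j) := by rw [hstar i j, one_mul]
  have hdelta : ∀ i k : Fin 12, ((12 : R) • (1 : Matrix (Fin 12) (Fin 12) R)) (ρ i) (ρ k)
      = ((12 : R) • (1 : Matrix (Fin 12) (Fin 12) R)) i k := by
    intro i k
    simp [Matrix.smul_apply, Matrix.one_apply, hbij.injective.eq_iff]
  refine ⟨?_, ?_, ?_, ?_, ?_, ?_⟩
  · ext i k
    rw [Matrix.mul_apply]
    calc ∑ j, K6 i j * K6star j k = ∑ j, M (ρ i) (ρ j) * N (ρ j) (ρ k) := by
          simp only [hK6, hstar_eq, hM]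
      _ = ∑ j, M (ρ i) j * N j (ρ k) := hbij.sum_comp (fun j => M (ρ i) j * N j (ρ k))
      _ = (M * N) (ρ i) (ρ k) := (Matrix.mul_apply).symm
      _ = ((12 : R) • (1 : Matrix (Fin 12) (Fin 12) R)) i k := by rw [hMN, hdelta]
  · ext i k
    rw [Matrix.mul_apply]
    calc ∑ j, K6star i j * K6 j k = ∑ j, N (ρ i) (ρ j) * M (ρ j) (ρ k) := by
          simp only [hK6, hstar_eq, hM]
      _ = ∑ j, N (ρ i) j * M j (ρ k) := hbij.sum_comp (fun j => N (ρ i) j * M j (ρ k))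
      _ = (N * M) (ρ i) (ρ k) := (Matrix.mul_apply).symm
      _ = ((12 : R) • (1 : Matrix (Fin 12) (Fin 12) R)) i k := by rw [hNM, hdelta]
  · intro j
    rw [hK6, hρ0, hM, Matrix.reindex_apply, Matrix.submatrix_apply, hs0,
      Matrix.kroneckerMap_apply]
    obtain ⟨c, d⟩ := e.symm (ρ j)
    fin_cases c <;> fin_cases d <;> simp [hB3, hK2, Matrix.vecHead, Matrix.vecTail]
  · intro i
    rw [hK6, hρ0, hM, Matrix.reindex_apply, Matrix.submatrix_apply, hs0,
      Matrix.kroneckerMap_apply]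
    obtain ⟨c, d⟩ := e.symm (ρ i)
    fin_cases c <;> fin_cases d <;> simp [hB3, hK2, Matrix.vecHead, Matrix.vecTail]
  · intro j
    rw [hK6, hρ11, hM, Matrix.reindex_apply, Matrix.submatrix_apply, hs3,
      Matrix.kroneckerMap_apply]
    obtain ⟨c, d⟩ := e.symm (ρ j)
    fin_cases c <;> fin_cases d <;> simp [hB3, hK2, Matrix.vecHead, Matrix.vecTail]
  · intro i
    rw [hK6, hρ11, hM, Matrix.reindex_apply, Matrix.submatrix_apply, hs3,
      Matrix.kroneckerMap_apply]
    obtain ⟨c, d⟩ := e.symm (ρ i)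
    fin_cases c <;> fin_cases d <;> simp [hB3, hK2, Matrix.vecHead, Matrix.vecTail]
end
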